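/- Let m, n be integers with m ≥ 1 and n ≥ 2m + 1. Alice has no winning strategy in the achievement game (S_{m,n}, K_{2n, 2m+1}, +), played on the complete bipartite graph with parts of sizes 2n and 2m+1. -/

import Mathlib

namespace AchievementGame

/-- A strategy for the achievement game: given the history of all moves played so far
(earliest first), produce the next move (an edge, i.e. an element of `Sym2`). -/
def Strategy (α : Type*) : Type _ := List (Sym2 α) → Sym2 α

/-- A strategy is valid for the host graph `G` if, whenever some edge of `G` is still
uncolored, it chooses an uncolored edge of `G`. -/
def Strategy.Valid {α : Type*} (G : SimpleGraph α) (s : Strategy α) : Prop :=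
  ∀ l : List (Sym2 α), (∃ e ∈ G.edgeSet, e ∉ l) → s l ∈ G.edgeSet ∧ s l ∉ l

/-- The history of the first `n` moves when Alice plays strategy `σ` and Bob plays
strategy `τ`; Alice moves first and the players alternate. -/
def hist {α : Type*} (σ τ : Strategy α) : ℕ → List (Sym2 α)
  | 0 => []
  | n + 1 => hist σ τ n ++ [(if n % 2 = 0 then σ else τ) (hist σ τ n)]

/-- The `n`-th move (0-indexed): even indices are Alice's (blue) moves,
odd indices are Bob's (red) moves. -/
def move {α : Type*} (σ τ : Strategy α) (n : ℕ) : Sym2 α :=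
  (if n % 2 = 0 then σ else τ) (hist σ τ n)

/-- The set `s` of edges contains a copy of the graph `F`. -/
def HasCopy {α β : Type*} (F : SimpleGraph β) (s : Set (Sym2 α)) : Prop :=
  ∃ f : β ↪ α, ∀ a b, F.Adj a b → s(f a, f b) ∈ s

/-- Alice has a winning strategy in the achievement game `(F, G, +)`: Alice has a valid
strategy such that against every valid strategy of Bob, at some legal move of Alice
(her `(k+1)`-st move, which exists since `2k+1 ≤ |E(G)|`) the blue edges contain a copy
of `F`, while the red edges played strictly before do not. -/
def AliceWins {α β : Type*} (F : SimpleGraph β) (G : SimpleGraph α) : Prop :=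
  ∃ σ : Strategy α, Strategy.Valid G σ ∧ ∀ τ : Strategy α, Strategy.Valid G τ →
    ∃ k : ℕ, 2 * k + 1 ≤ G.edgeSet.ncard ∧
      HasCopy F {e | ∃ i ≤ k, e = move σ τ (2 * i)} ∧
      ¬ HasCopy F {e | ∃ i < k, e = move σ τ (2 * i + 1)}

/-- The matching `mK₂` consisting of `m` pairwise disjoint edges. -/
def matching (m : ℕ) : SimpleGraph (Fin m ⊕ Fin m) :=
  SimpleGraph.fromRel (fun a b => ∃ i, a = Sum.inl i ∧ b = Sum.inr i)

/-- The star `K_{1,m}`: the center `0` joined to `m` leaves. -/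
def star (m : ℕ) : SimpleGraph (Fin (m + 1)) :=
  SimpleGraph.fromRel (fun a _ => a = 0)

/-- The double star `S_{m,n}`: disjoint stars `K_{1,m}` and `K_{1,n}` with an edge
joining their centers `Sum.inl 0` and `Sum.inr 0`. -/
def doubleStar (m n : ℕ) : SimpleGraph (Fin (m + 1) ⊕ Fin (n + 1)) :=
  SimpleGraph.fromRel (fun a b =>
    (a = Sum.inl 0 ∧ ∃ i, b = Sum.inl i) ∨
    (a = Sum.inr 0 ∧ ∃ j, b = Sum.inr j) ∨
    (a = Sum.inl 0 ∧ b = Sum.inr 0))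

/-- The disjoint union `K_{1,m} ∪ nK₂` of a star and a matching. -/
def starMatching (m n : ℕ) : SimpleGraph (Fin (m + 1) ⊕ (Fin n ⊕ Fin n)) :=
  SimpleGraph.fromRel (fun a b =>
    (a = Sum.inl 0 ∧ ∃ i, b = Sum.inl i) ∨
    (∃ i, a = Sum.inr (Sum.inl i) ∧ b = Sum.inr (Sum.inr i)))

end AchievementGame

open AchievementGame

/-!
Bob pairs each edge `(i, j)` of `K_{2n,2m+1}` with `(2n - 1 - i, j)` and answers every move of
Alice with the partner of her edge. Then Alice's edges never contain a pair, so a vertex on the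
side of size `2m + 1` has at most `n` blue neighbours, and a vertex on the side of size `2n` has
at most `2m + 1 ≤ n`. But `S_{m,n}` contains the star `K_{1,n+1}` centred at its big centre.
-/

open SimpleGraph

theorem Fin.rev_ne_self {n : ℕ} (i : Fin (2 * n)) : i.rev ≠ i := by
  intro h
  have hval := congrArg Fin.val h
  rw [Fin.val_rev] at hval
  omega

namespace AchievementGame

variable {α : Type*}

section Play

variable (σ τ : Strategy α)

def blueEdges (k : ℕ) : Set (Sym2 α) := {e | ∃ i ≤ k, e = move σ τ (2 * i)}

theorem hist_succ (t : ℕ) : hist σ τ (t + 1) = hist σ τ t ++ [move σ τ t] := rfl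

theorem length_hist (t : ℕ) : (hist σ τ t).length = t := by
  induction t with
  | zero => rfl
  | succ t ih => simp [hist_succ, ih]

theorem hist_prefix_of_le {t t' : ℕ} (h : t ≤ t') : hist σ τ t <+: hist σ τ t' := by
  induction t', h using Nat.le_induction with
  | base => exact List.prefix_refl _
  | succ t' _ ih => exact ih.trans (List.prefix_append _ _)

theorem move_mem_hist {t t' : ℕ} (h : t < t') : move σ τ t ∈ hist σ τ t' :=
  (hist_prefix_of_le σ τ h).subset (by simp [hist_succ])

theorem exists_edge_not_mem_hist (G : SimpleGraph α) {t : ℕ} (h : t < G.edgeSet.ncard) :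
    ∃ e ∈ G.edgeSet, e ∉ hist σ τ t := by
  classical
  by_contra! hall
  have hsub : G.edgeSet ⊆ ↑(hist σ τ t).toFinset := fun e he => by simpa using hall e he
  have hcard := Set.ncard_le_ncard hsub (Finset.finite_toSet _)
  rw [Set.ncard_coe_finset] at hcard
  have hlen := (hist σ τ t).toFinset_card_le
  rw [length_hist] at hlen
  omega

variable {σ τ} {G : SimpleGraph α}

theorem move_mem_edgeSet_and_not_mem_hist (hσ : Strategy.Valid G σ) (hτ : Strategy.Valid G τ)
    {t : ℕ} (h : t < G.edgeSet.ncard) :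
    move σ τ t ∈ G.edgeSet ∧ move σ τ t ∉ hist σ τ t := by
  have hfree := exists_edge_not_mem_hist σ τ G h
  unfold move
  split
  · exact hσ _ hfree
  · exact hτ _ hfree

theorem blueEdges_subset_edgeSet (hσ : Strategy.Valid G σ)
    (hτ : Strategy.Valid G τ) {k : ℕ} (hk : 2 * k + 1 ≤ G.edgeSet.ncard) :
    blueEdges σ τ k ⊆ G.edgeSet := by
  rintro e ⟨i, hi, rfl⟩
  exact (move_mem_edgeSet_and_not_mem_hist hσ hτ (by omega)).1

end Play

section Pairing

variable [Nonempty α] (G : SimpleGraph α) (p : Sym2 α → Sym2 α)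

open Classical in
noncomputable def pairingStrategy : Strategy α := fun l =>
  haveI : Nonempty (Sym2 α) := .map Sym2.diag ‹_›
  let free f := f ∈ G.edgeSet ∧ f ∉ l
  match l.getLast? with
  | some e => if free (p e) then p e else epsilon free
  | none => epsilon free

theorem pairingStrategy_valid : Strategy.Valid G (pairingStrategy G p) := by
  intro l hfree
  have hε := Classical.epsilon_spec hfree
  unfold pairingStrategy
  cases l.getLast? with
  | none => exact hε
  | some e =>
    dsimp only
    split_ifs with hpe
    exacts [hpe, hε]

theorem pairingStrategy_concat {l : List (Sym2 α)} {e : Sym2 α} (he : p e ∈ G.edgeSet)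
    (hl : p e ∉ l ++ [e]) : pairingStrategy G p (l ++ [e]) = p e := by
  simp [pairingStrategy, he, hl]

variable {G p} {σ : Strategy α}

theorem apply_move_mem_hist_pairingStrategy (hσ : Strategy.Valid G σ)
    (hp : ∀ e ∈ G.edgeSet, p e ∈ G.edgeSet) {i : ℕ} (hi : 2 * i + 1 < G.edgeSet.ncard) :
    p (move σ (pairingStrategy G p) (2 * i)) ∈ hist σ (pairingStrategy G p) (2 * i + 2) := by
  set τ := pairingStrategy G p
  by_cases hplayed : p (move σ τ (2 * i)) ∈ hist σ τ (2 * i + 1)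
  · exact (hist_prefix_of_le σ τ (by omega)).subset hplayed
  · have hreply : move σ τ (2 * i + 1) = p (move σ τ (2 * i)) := by
      have hmem : move σ τ (2 * i) ∈ G.edgeSet :=
        (move_mem_edgeSet_and_not_mem_hist hσ (pairingStrategy_valid G p) (by omega)).1
      rw [move, if_neg (by omega), hist_succ]
      exact pairingStrategy_concat G p (hp _ hmem) hplayed
    rw [← hreply]
    exact move_mem_hist σ τ (by omega)

theorem apply_move_ne_move_pairingStrategy (hσ : Strategy.Valid G σ)
    (hp : ∀ e ∈ G.edgeSet, p e ∈ G.edgeSet) {i j : ℕ} (hij : i < j)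
    (hj : 2 * j < G.edgeSet.ncard) :
    p (move σ (pairingStrategy G p) (2 * i)) ≠ move σ (pairingStrategy G p) (2 * j) := by
  intro h
  have hplayed := apply_move_mem_hist_pairingStrategy hσ hp (i := i) (by omega)
  rw [h] at hplayed
  exact (move_mem_edgeSet_and_not_mem_hist hσ (pairingStrategy_valid G p) hj).2
    ((hist_prefix_of_le σ _ (by omega)).subset hplayed)

theorem apply_not_mem_blueEdges_pairingStrategy (hσ : Strategy.Valid G σ)
    (hp : ∀ e ∈ G.edgeSet, p e ∈ G.edgeSet) (hinv : Function.Involutive p)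
    (hne : ∀ e ∈ G.edgeSet, p e ≠ e) {k : ℕ} (hk : 2 * k + 1 ≤ G.edgeSet.ncard) :
    ∀ e ∈ blueEdges σ (pairingStrategy G p) k,
      p e ∉ blueEdges σ (pairingStrategy G p) k := by
  rintro _ ⟨i, hi, rfl⟩ ⟨j, hj, hij⟩
  rcases lt_trichotomy i j with hlt | rfl | hgt
  · exact apply_move_ne_move_pairingStrategy hσ hp hlt (by omega) hij
  · exact hne _ (blueEdges_subset_edgeSet hσ (pairingStrategy_valid G p) hk ⟨i, hi, rfl⟩) hij
  · exact apply_move_ne_move_pairingStrategy hσ hp hgt (by omega) (by rw [← hij, hinv])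

end Pairing

theorem HasCopy.of_copy {β γ : Type*} {F : SimpleGraph β} {F' : SimpleGraph γ}
    {s : Set (Sym2 α)} (c : F'.Copy F) (h : HasCopy F s) : HasCopy F' s := by
  obtain ⟨f, hf⟩ := h
  exact ⟨c.toEmbedding.trans f, fun a b hab => hf _ _ (c.toHom.map_adj hab)⟩

def starCopyDoubleStar (m n : ℕ) : (star (n + 1)).Copy (doubleStar m n) :=
  let leaf : Fin (n + 1) → Fin (m + 1) ⊕ Fin (n + 1) :=
    Fin.cons (Sum.inl 0) fun j => Sum.inr j.succ
  have hleaf (j : Fin (n + 1)) : (doubleStar m n).Adj (Sum.inr 0) (leaf j) := by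
    cases j using Fin.cases <;> simp [leaf, doubleStar, fromRel_adj, (Fin.succ_ne_zero _).symm]
  { toHom :=
      { toFun := Fin.cons (Sum.inr 0) leaf
        map_rel' := by
          intro a b hab
          simp only [star, fromRel_adj] at hab
          obtain ⟨hne, rfl | rfl⟩ := hab
          · obtain ⟨j, rfl⟩ := Fin.exists_succ_eq.2 hne.symm
            simpa using hleaf j
          · obtain ⟨j, rfl⟩ := Fin.exists_succ_eq.2 hne
            simpa using (hleaf j).symm }
    injective' := by
      refine Fin.cons_injective_iff.2 ⟨?_, Fin.cons_injective_iff.2 ⟨?_, ?_⟩⟩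
      · rintro ⟨j, hj⟩
        cases j using Fin.cases <;> simp [leaf] at hj
      · simp
      · exact fun a b h => Fin.succ_injective _ (Sum.inr_injective h) }

section Bipartite

variable {L R : Type*} (φ : L → L)

def flipEdge : Sym2 (L ⊕ R) → Sym2 (L ⊕ R) := Sym2.map (Sum.map φ id)

variable {φ}

theorem flipEdge_involutive (hφ : Function.Involutive φ) :
    Function.Involutive (flipEdge (R := R) φ) := by
  intro e
  simp [flipEdge, Sym2.map_map, Sum.map_map, hφ.comp_self]

theorem flipEdge_mem_edgeSet {e : Sym2 (L ⊕ R)}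
    (he : e ∈ (completeBipartiteGraph L R).edgeSet) :
    flipEdge φ e ∈ (completeBipartiteGraph L R).edgeSet := by
  induction e with
  | _ a b => cases a <;> cases b <;> simp_all [flipEdge]

theorem flipEdge_ne (hφ : ∀ x, φ x ≠ x) {e : Sym2 (L ⊕ R)}
    (he : e ∈ (completeBipartiteGraph L R).edgeSet) : flipEdge φ e ≠ e := by
  induction e with
  | _ a b => cases a <;> cases b <;> simp_all [flipEdge]

theorem not_hasCopy_star [Fintype L] [Fintype R] (hφ : Function.Injective φ)
    {B : Set (Sym2 (L ⊕ R))} (hB : B ⊆ (completeBipartiteGraph L R).edgeSet)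
    (hpair : ∀ e ∈ B, flipEdge φ e ∉ B) {k : ℕ} (hR : Fintype.card R < k)
    (hL : Fintype.card L < 2 * k) : ¬ HasCopy (star k) B := by
  rintro ⟨f, hf⟩
  have hleaf (j : Fin k) : s(f 0, f j.succ) ∈ B :=
    hf _ _ (by simp [star, fromRel_adj, (Fin.succ_ne_zero j).symm])
  have hleaf_inj : Function.Injective fun j : Fin k => f j.succ :=
    f.injective.comp (Fin.succ_injective _)
  rcases hc : f 0 with c | c
  · have (j : Fin k) : ∃ y, f j.succ = Sum.inr y := by
      simpa [hc, Sum.isRight_iff] using hB (hleaf j)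
    choose g hg using this
    have hg_inj : Function.Injective g := fun a b h => hleaf_inj (by simp [hg, h])
    have hcard := Fintype.card_le_of_injective g hg_inj
    rw [Fintype.card_fin] at hcard
    omega
  · have (j : Fin k) : ∃ x, f j.succ = Sum.inl x := by
      simpa [hc, Sum.isLeft_iff] using hB (hleaf j)
    choose g hg using this
    have hg_inj : Function.Injective g := fun a b h => hleaf_inj (by simp [hg, h])
    have hdisj (a b : Fin k) : g a ≠ φ (g b) := by
      intro h
      apply hpair _ (hleaf b)
      simpa [flipEdge, hc, hg, h] using hleaf a
    have hcard := Fintype.card_le_of_injective _ (hg_inj.sumElim (hφ.comp hg_inj) hdisj)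
    rw [Fintype.card_sum, Fintype.card_fin] at hcard
    omega

end Bipartite

end AchievementGame

theorem stmt10_general (m n : ℕ) (hn : 2 * m + 1 ≤ n) :
    ¬ AliceWins (doubleStar m n)
      (completeBipartiteGraph (Fin (2 * n)) (Fin (2 * m + 1))) := by
  rintro ⟨σ, hσ, hwin⟩
  have hbob := pairingStrategy_valid (completeBipartiteGraph (Fin (2 * n)) (Fin (2 * m + 1)))
    (flipEdge Fin.rev)
  obtain ⟨k, hk, hblue, -⟩ := hwin _ hbob
  have hpairFree := apply_not_mem_blueEdges_pairingStrategy hσ (fun _ => flipEdge_mem_edgeSet)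
    (flipEdge_involutive Fin.rev_involutive) (fun _ => flipEdge_ne Fin.rev_ne_self) hk
  refine not_hasCopy_star Fin.rev_injective (blueEdges_subset_edgeSet hσ hbob hk) hpairFree
    ?_ ?_ (hblue.of_copy (starCopyDoubleStar m n)) <;>
  simp only [Fintype.card_fin] <;> omega

/-- Let `m, n` be integers with `m ≥ 1` and `n ≥ 2m + 1`. Alice has no winning strategy
in the achievement game `(S_{m,n}, K_{2n,2m+1}, +)`. -/
theorem stmt10 (m n : ℕ) (hm : 1 ≤ m) (hn : 2 * m + 1 ≤ n) :
    ¬ AliceWins (doubleStar m n)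
      (completeBipartiteGraph (Fin (2 * n)) (Fin (2 * m + 1))) :=
  stmt10_general m n hn
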